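/- The vertical sections of the double tower recover the invariant density: for every x ∈ I_β, the Lebesgue measure of {y ∈ ℝ : ∃ω ∈ Ω with (ω,x,y) ∈ E ∪ Ē} equals Σ_{n=0}^∞ (2β)^{−n} Σ_{w ∈ {0,1}ⁿ} ( χ_{[0, r(w)]}(x) + χ_{[1/(β−1) − r(w), 1/(β−1)]}(x) ), and this in turn equals Σ_{n=0}^∞ (2β)^{−n} Σ_{w ∈ {0,1}ⁿ} ( χ_{[0, R^n_{β,w}(1)]}(x) + χ_{[R^n_{β,w}(1/(β−1)−1), 1/(β−1)]}(x) ). -/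

import Mathlib

open MeasureTheory Set Filter
open scoped Classical ENNReal

namespace RandomBeta

noncomputable section

/-- The left shift on `{0,1}^ℕ`. -/
def shift (ω : ℕ → Bool) : ℕ → Bool := fun n => ω (n + 1)

/-- The digit complementation `ω̄ᵢ = 1 - ωᵢ`. -/
def compSeq (ω : ℕ → Bool) : ℕ → Bool := fun n => !(ω n)

/-- The interval `I_β = [0, 1/(β-1)]`. -/
def Ibeta (β : ℝ) : Set ℝ := Set.Icc 0 (1 / (β - 1))

/-- `L = [0, 1/β)`. -/
def Lset (β : ℝ) : Set ℝ := Set.Ico 0 (1 / β)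

/-- `S = [1/β, 1/(β(β-1))]`. -/
def Sset (β : ℝ) : Set ℝ := Set.Icc (1 / β) (1 / (β * (β - 1)))

/-- `R = (1/(β(β-1)), 1/(β-1)]`. -/
def Rset (β : ℝ) : Set ℝ := Set.Ioc (1 / (β * (β - 1))) (1 / (β - 1))

/-- The digit produced at the point `x` when the coin shows `a`:
`0` on `L`, `a` on `S`, `1` on `R`. -/
def digitB (β x : ℝ) (a : Bool) : Bool :=
  if x < 1 / β then false else if x ≤ 1 / (β * (β - 1)) then a else true

/-- One step of the random β-transformation on the second coordinate:
`T₀ x = βx` on `L`, `T_a x` on `S`, `T₁ x = βx - 1` on `R`. -/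
def rStep (β x : ℝ) (a : Bool) : ℝ := β * x - (if digitB β x a then 1 else 0)

/-- The random β-transformation in skew-product form. -/
def Rmap (β : ℝ) (p : (ℕ → Bool) × ℝ) : (ℕ → Bool) × ℝ :=
  (shift p.1, rStep β p.2 (p.1 0))

/-- The random β-transformation `K_β` (shifting `ω` only on `S`). -/
def Kmap (β : ℝ) (p : (ℕ → Bool) × ℝ) : (ℕ → Bool) × ℝ :=
  if p.2 < 1 / β then (p.1, β * p.2)
  else if p.2 ≤ 1 / (β * (β - 1)) then (shift p.1, β * p.2 - (if p.1 0 then 1 else 0))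
  else (p.1, β * p.2 - 1)

/-- `R^n_{β,w}(x)`: the second coordinate of `R_β^n (ω, x)` for any `ω` starting with `w`. -/
def rItin (β x : ℝ) (w : List Bool) : ℝ := w.foldl (rStep β) x

/-- `r(w) = R^n_{β,w}(1)`. -/
def rW (β : ℝ) (w : List Bool) : ℝ := rItin β 1 w

/-- The (unnormalised) density `ρ*_β`. -/
def rhoStar (β x : ℝ) : ℝ :=
  ∑' n : ℕ, ((2 * β) ^ n)⁻¹ * ∑ w : Fin n → Bool,
    ((Set.Icc (0 : ℝ) (rW β (List.ofFn w))).indicator 1 x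
      + (Set.Icc (rItin β (1 / (β - 1) - 1) (List.ofFn w)) (1 / (β - 1))).indicator 1 x)

/-- `m` is the `(1/2, 1/2)` Bernoulli measure on `{0,1}^ℕ`. -/
def IsBernoulliHalf (m : Measure (ℕ → Bool)) : Prop :=
  IsProbabilityMeasure m ∧
    ∀ (n : ℕ) (w : Fin n → Bool), m {ω | ∀ i : Fin n, ω i = w i} = (2 : ℝ≥0∞)⁻¹ ^ n

/-- The probability measure `μ_β` on `I_β` with density `ρ*_β / ∫ ρ*_β` w.r.t. Lebesgue. -/
def muBeta (β : ℝ) : Measure ℝ :=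
  (volume.restrict (Ibeta β)).withDensity
    (fun x => ENNReal.ofReal (rhoStar β x / ∫ y in Ibeta β, rhoStar β y))

/-- `l(w) = Σ ωᵢ 2^(i-1)`. -/
def lVal : List Bool → ℕ
  | [] => 0
  | a :: t => (if a then 1 else 0) + 2 * lVal t

/-- `v(w) = Σ_{k<n} β^(-k) + l(w)/(2β)^n`. -/
def vVal (β : ℝ) (w : List Bool) : ℝ :=
  (∑ k ∈ Finset.range w.length, ((β : ℝ) ^ k)⁻¹) + (lVal w : ℝ) / (2 * β) ^ w.length

/-- The sublevel `E_w = Ω × [0, r(w)] × [v(w), v(w) + (2β)^(-n))` of the tower. -/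
def Eset (β : ℝ) (w : List Bool) : Set ((ℕ → Bool) × ℝ × ℝ) :=
  {p | p.2.1 ∈ Set.Icc 0 (rW β w) ∧
    p.2.2 ∈ Set.Ico (vVal β w) (vVal β w + ((2 * β) ^ w.length)⁻¹)}

/-- The tower `E`. -/
def Etower (β : ℝ) : Set ((ℕ → Bool) × ℝ × ℝ) := ⋃ w : List Bool, Eset β w

/-- The step from `w` to `wa` is of type `T₁`. -/
def stepT1 (β : ℝ) (w : List Bool) (a : Bool) : Prop := digitB β (rW β w) a = true

/-- `C₁(wa) = v(wa) - v(w)/(2β)`. -/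
def C1 (β : ℝ) (w : List Bool) (a : Bool) : ℝ := vVal β (w ++ [a]) - vVal β w / (2 * β)

/-- `C₂(wa) = 1/(2β) + Σ (2β)^(-(m+1)) - v(w)/(2β)`, summing over pairs `(u, b)` with
the step `u → ub` of type `T₁` and `v(u) < v(w)`. -/
def C2 (β : ℝ) (w : List Bool) : ℝ :=
  (2 * β)⁻¹ +
    (∑' u : {q : List Bool × Bool // stepT1 β q.1 q.2 ∧ vVal β q.1 < vVal β w},
      ((2 * β) ^ (u.1.1.length + 1))⁻¹) - vVal β w / (2 * β)

/-- The action of `ψ` on points of the sublevel `E_w`. -/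
def psiAux (β : ℝ) (w : List Bool) (p : (ℕ → Bool) × ℝ × ℝ) : (ℕ → Bool) × ℝ × ℝ :=
  if digitB β (rW β w) (p.1 0) then
    if p.2.1 < 1 / β then (shift p.1, β * p.2.1, p.2.2 / (2 * β) + C2 β w)
    else (shift p.1, β * p.2.1 - 1, p.2.2 / (2 * β) + C1 β w (p.1 0))
  else (shift p.1, β * p.2.1, p.2.2 / (2 * β) + C1 β w (p.1 0))

/-- The tower map `ψ : E → E` (the identity off the tower). -/
def psi (β : ℝ) (p : (ℕ → Bool) × ℝ × ℝ) : (ℕ → Bool) × ℝ × ℝ :=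
  if h : ∃ w : List Bool, p ∈ Eset β w then psiAux β h.choose p else p

/-- The reflection `P(ω, x, y) = (ω̄, 1/(β-1) - x, -y)`. -/
def Pmap (β : ℝ) (p : (ℕ → Bool) × ℝ × ℝ) : (ℕ → Bool) × ℝ × ℝ :=
  (compSeq p.1, 1 / (β - 1) - p.2.1, -p.2.2)

/-- The reflected tower `Ē = P(E)`. -/
def Ebar (β : ℝ) : Set ((ℕ → Bool) × ℝ × ℝ) := Pmap β '' Etower β

/-- The exceptional set `F_w ⊆ E_w` (empty unless `r(w) ∈ R`). -/
def Fset (β : ℝ) (w : List Bool) : Set ((ℕ → Bool) × ℝ × ℝ) :=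
  {p | p ∈ Eset β w ∧ p.1 0 = false ∧ p.2.1 ∈ Sset β ∧ rW β w ∈ Rset β}

/-- The swap map `Q` interchanging `ψ(F_w)` with `ψ(F̄_w̄) = P(ψ(F_w))`. -/
def Qmap (β : ℝ) (p : (ℕ → Bool) × ℝ × ℝ) : (ℕ → Bool) × ℝ × ℝ :=
  if ∃ w : List Bool, p ∈ psi β '' Fset β w then (p.1, p.2.1 + 1, -p.2.2)
  else if ∃ w : List Bool, p ∈ Pmap β '' (psi β '' Fset β w) then (p.1, p.2.1 - 1, -p.2.2)
  else p

/-- `ψ` extended to `E ∪ Ē`, acting by `P ∘ ψ ∘ P⁻¹` on `Ē`. -/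
def psiFull (β : ℝ) (p : (ℕ → Bool) × ℝ × ℝ) : (ℕ → Bool) × ℝ × ℝ :=
  if p ∈ Etower β then psi β p else Pmap β (psi β (Pmap β p))

/-- The corrected tower map `ψ̃ = Q ∘ ψ`. -/
def psiTilde (β : ℝ) : ((ℕ → Bool) × ℝ × ℝ) → ((ℕ → Bool) × ℝ × ℝ) :=
  Qmap β ∘ psiFull β

/-- `h(ω, x, n) = #{0 ≤ i ≤ n-1 : π₂(K_β^i(ω,x)) ∈ S}`. -/
def hCount (β : ℝ) (ω : ℕ → Bool) (x : ℝ) (n : ℕ) : ℕ :=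
  ((Finset.range n).filter (fun i => ((Kmap β)^[i] (ω, x)).2 ∈ Sset β)).card

/-- `π_β(a) = Σ aᵢ β^(-(i+1))`. -/
def piB (β : ℝ) (a : ℕ → Bool) : ℝ :=
  ∑' i : ℕ, (if a i then (1 : ℝ) else 0) * ((β : ℝ) ^ (i + 1))⁻¹

/-- `𝒩ₙ(x; β)`: the number of words of length `n` extendable to a β-expansion of `x`. -/
def Ncount (β x : ℝ) (n : ℕ) : ℕ :=
  {a : Fin n → Bool | ∃ b : ℕ → Bool, (∀ i : Fin n, b i = a i) ∧ x = piB β b}.ncard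

end


/-! The section of `E` at height `x` is the union of the intervals `[v(w), v(w) + (2β)^{-n})`
over the words `w` of length `n` with `x ≤ r(w)`. These intervals are pairwise disjoint: the words
of length `n` cut `[Σ_{k<n} β^{-k}, Σ_{k≤n} β^{-k})` into `2ⁿ` consecutive pieces numbered by the
binary value `l(w)`. The section of `Ē` is the mirror image `y ↦ -y` of the section of `E` at
height `1/(β-1) - x`, and meets the section of `E` at most in `y = 0`. Adding up lengths gives the
first series. For `β ≤ 2` the reflection `x ↦ 1/(β-1) - x` exchanges `L` and `R` and preserves `S`,
so it conjugates `T_a` to `T_{1-a}`; hence `R^n_{β,w̄}(1/(β-1) - 1) = 1/(β-1) - r(w)`, and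
reindexing by `w ↦ w̄` gives the second equality. -/

section Levels

variable {β : ℝ}

lemma lVal_eq_ofDigits (w : List Bool) : lVal w = Nat.ofDigits 2 (w.map Bool.toNat) := by
  induction w with
  | nil => rfl
  | cons a t ih => cases a <;> simp [lVal, Nat.ofDigits_cons, ih]

lemma toNat_lt_two_of_mem_map (w : List Bool) : ∀ d ∈ w.map Bool.toNat, d < 2 :=
  List.forall_mem_map.mpr fun b _ => Bool.toNat_lt b

lemma lVal_lt_two_pow (w : List Bool) : lVal w < 2 ^ w.length := by
  simpa [lVal_eq_ofDigits] using
    Nat.ofDigits_lt_base_pow_length one_lt_two (toNat_lt_two_of_mem_map w)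

lemma eq_of_length_eq_of_lVal_eq {w w' : List Bool} (hlen : w.length = w'.length)
    (h : lVal w = lVal w') : w = w' := by
  rw [lVal_eq_ofDigits, lVal_eq_ofDigits] at h
  refine List.map_injective_iff.mpr (fun a b hab => ?_) <|
    Nat.ofDigits_inj_of_len_eq one_lt_two (by simpa using hlen)
      (toNat_lt_two_of_mem_map w) (toNat_lt_two_of_mem_map w') h
  cases a <;> cases b <;> simp_all

lemma geom_sum_le_vVal (hβ : 0 < β) (w : List Bool) :
    ∑ k ∈ Finset.range w.length, (β ^ k)⁻¹ ≤ vVal β w :=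
  le_add_of_nonneg_right (by positivity)

lemma vVal_nonneg (hβ : 0 < β) (w : List Bool) : 0 ≤ vVal β w :=
  (Finset.sum_nonneg fun _ _ => by positivity).trans (geom_sum_le_vVal hβ w)

lemma vVal_add_le_geom_sum_succ (hβ : 0 < β) (w : List Bool) :
    vVal β w + ((2 * β) ^ w.length)⁻¹ ≤ ∑ k ∈ Finset.range (w.length + 1), (β ^ k)⁻¹ := by
  have hl : (lVal w : ℝ) + 1 ≤ 2 ^ w.length := by exact_mod_cast lVal_lt_two_pow w
  have hpow : (2 : ℝ) ^ w.length / (2 * β) ^ w.length = (β ^ w.length)⁻¹ := by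
    rw [mul_pow]; field_simp
  rw [Finset.sum_range_succ, vVal, add_assoc, inv_eq_one_div, ← add_div, ← hpow]
  gcongr

lemma vVal_add_le_of_length_lt (hβ : 0 < β) {w w' : List Bool} (h : w.length < w'.length) :
    vVal β w + ((2 * β) ^ w.length)⁻¹ ≤ vVal β w' :=
  calc vVal β w + ((2 * β) ^ w.length)⁻¹
      ≤ ∑ k ∈ Finset.range (w.length + 1), (β ^ k)⁻¹ := vVal_add_le_geom_sum_succ hβ w
    _ ≤ ∑ k ∈ Finset.range w'.length, (β ^ k)⁻¹ :=
        Finset.sum_le_sum_of_subset_of_nonneg (Finset.range_subset_range.mpr h)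
          fun _ _ _ => by positivity
    _ ≤ vVal β w' := geom_sum_le_vVal hβ w'

lemma vVal_add_le_of_lVal_lt (hβ : 0 < β) {w w' : List Bool} (hlen : w.length = w'.length)
    (h : lVal w < lVal w') : vVal β w + ((2 * β) ^ w.length)⁻¹ ≤ vVal β w' := by
  have hl : (lVal w : ℝ) + 1 ≤ lVal w' := by exact_mod_cast h
  rw [vVal, vVal, ← hlen, add_assoc, inv_eq_one_div, ← add_div]
  gcongr

/-- The `y`-interval of the sublevel `E_w`. -/
def level (β : ℝ) (w : List Bool) : Set ℝ :=
  Ico (vVal β w) (vVal β w + ((2 * β) ^ w.length)⁻¹)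

lemma pairwise_disjoint_level (hβ : 0 < β) : Pairwise (Function.onFun Disjoint (level β)) := by
  have below : ∀ {w w' : List Bool}, vVal β w + ((2 * β) ^ w.length)⁻¹ ≤ vVal β w' →
      Disjoint (level β w) (level β w') := fun h =>
    Ico_disjoint_Ico.mpr (min_le_of_left_le (h.trans (le_max_right _ _)))
  intro w w' hne
  rcases lt_trichotomy w.length w'.length with hlen | hlen | hlen
  · exact below (vVal_add_le_of_length_lt hβ hlen)
  · rcases lt_trichotomy (lVal w) (lVal w') with hl | hl | hl
    · exact below (vVal_add_le_of_lVal_lt hβ hlen hl)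
    · exact absurd (eq_of_length_eq_of_lVal_eq hlen hl) hne
    · exact (below (vVal_add_le_of_lVal_lt hβ hlen.symm hl)).symm
  · exact (below (vVal_add_le_of_length_lt hβ hlen)).symm

end Levels

section Sections

variable {β : ℝ}

/-- The section `{y | ∃ ω, (ω, x, y) ∈ E}` of the tower, which does not depend on `ω`. -/
def towerSection (β x : ℝ) : Set ℝ := ⋃ w ∈ {w : List Bool | x ∈ Icc 0 (rW β w)}, level β w

lemma mem_Etower_iff {p : (ℕ → Bool) × ℝ × ℝ} :
    p ∈ Etower β ↔ p.2.2 ∈ towerSection β p.2.1 := by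
  simp only [Etower, Eset, towerSection, level, mem_iUnion, exists_prop]
  rfl

lemma Pmap_involutive : Function.Involutive (Pmap β) := fun _ =>
  Prod.ext (funext fun _ => Bool.not_not _) (by simp [Pmap])

lemma mem_Ebar_iff {p : (ℕ → Bool) × ℝ × ℝ} : p ∈ Ebar β ↔ Pmap β p ∈ Etower β := by
  rw [Ebar, Pmap_involutive.image_eq_preimage_symm]
  rfl

lemma setOf_mem_Etower_union_Ebar (x : ℝ) :
    {y | ∃ ω : ℕ → Bool, (ω, x, y) ∈ Etower β ∪ Ebar β}
      = towerSection β x ∪ -towerSection β (1 / (β - 1) - x) := by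
  ext y
  simp [mem_Etower_iff, mem_Ebar_iff, Pmap]

lemma measurableSet_towerSection (x : ℝ) : MeasurableSet (towerSection β x) :=
  MeasurableSet.biUnion (to_countable _) fun _ _ => measurableSet_Ico

lemma towerSection_subset_Ici (hβ : 0 < β) (x : ℝ) : towerSection β x ⊆ Ici 0 :=
  iUnion₂_subset fun w _ _ hy => (vVal_nonneg hβ w).trans hy.1

lemma volume_towerSection (hβ : 0 < β) (x : ℝ) :
    volume (towerSection β x)
      = ∑' w : List Bool,
          ENNReal.ofReal (((2 * β) ^ w.length)⁻¹ * (Icc 0 (rW β w)).indicator 1 x) := by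
  rw [towerSection, measure_biUnion (to_countable _)
    ((pairwise_disjoint_level hβ).set_pairwise _) fun _ _ => measurableSet_Ico,
    tsum_subtype {w | x ∈ Icc 0 (rW β w)} fun w => volume (level β w)]
  refine tsum_congr fun w => ?_
  by_cases hx : x ∈ Icc 0 (rW β w)
  · rw [indicator_of_mem (s := {w : List Bool | x ∈ Icc 0 (rW β w)}) hx, indicator_of_mem hx,
      level, Real.volume_Ico, add_sub_cancel_left, Pi.one_apply, mul_one]
  · rw [indicator_of_notMem (s := {w : List Bool | x ∈ Icc 0 (rW β w)}) hx,
      indicator_of_notMem hx, mul_zero, ENNReal.ofReal_zero]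

lemma measure_union_neg_of_subset_Ici {μ : Measure ℝ} [NullSingletonClass μ] [μ.IsNegInvariant]
    {A B : Set ℝ} (hA : A ⊆ Ici 0) (hB : B ⊆ Ici 0) (hBm : MeasurableSet B) :
    μ (A ∪ -B) = μ A + μ B := by
  have hinter : μ (A ∩ -B) = 0 :=
    measure_mono_null (fun y hy => le_antisymm (neg_nonneg.mp (hB hy.2)) (hA hy.1))
      (measure_singleton 0)
  rw [← Measure.measure_neg μ B, ← measure_union_add_inter₀ A hBm.neg.nullMeasurableSet,
    hinter, add_zero]

lemma tsum_list_eq_tsum_sum_ofFn {α : Type*} [Fintype α] (f : List α → ℝ≥0∞) :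
    ∑' l, f l = ∑' n, ∑ v : Fin n → α, f (List.ofFn v) := by
  rw [← List.equivSigmaTuple.symm.tsum_eq, ENNReal.tsum_sigma']
  exact tsum_congr fun n => tsum_fintype _

lemma summable_inv_two_mul_pow_mul_sum (hβ : 1 < β) {C : ℝ}
    {g : (n : ℕ) → (Fin n → Bool) → ℝ} (hg₀ : ∀ n v, 0 ≤ g n v) (hgC : ∀ n v, g n v ≤ C) :
    Summable fun n => ((2 * β) ^ n)⁻¹ * ∑ v, g n v := by
  have hβ₀ : 0 < β := one_pos.trans hβ
  refine Summable.of_nonneg_of_le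
    (fun n => mul_nonneg (by positivity) (Finset.sum_nonneg fun v _ => hg₀ n v)) (fun n => ?_)
    ((summable_geometric_of_lt_one (inv_nonneg.mpr hβ₀.le) (inv_lt_one_of_one_lt₀ hβ)).mul_left C)
  calc ((2 * β) ^ n)⁻¹ * ∑ v, g n v ≤ ((2 * β) ^ n)⁻¹ * (2 ^ n * C) := by
        gcongr
        simpa using Finset.sum_le_card_nsmul Finset.univ (g n) C fun v _ => hgC n v
    _ = C * β⁻¹ ^ n := by rw [mul_pow, inv_pow]; field_simp

end Sections

section Reflection

variable {β : ℝ}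

lemma digitB_one_div_sub_sub (hβ₁ : 1 < β) (hβ₂ : β ≤ 2) (x : ℝ) (a : Bool) :
    digitB β (1 / (β - 1) - x) (!a) = !digitB β x a := by
  have hβ₀ : 0 < β := one_pos.trans hβ₁
  have hβ₁' : 0 < β - 1 := sub_pos.mpr hβ₁
  have hsplit : 1 / (β - 1) - 1 / β = 1 / (β * (β - 1)) := by field_simp; ring
  have hLS : 1 / β ≤ 1 / (β * (β - 1)) :=
    one_div_le_one_div_of_le (by positivity) (by nlinarith)
  unfold digitB
  split_ifs <;> first | rfl | (exfalso; linarith)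

lemma rStep_one_div_sub_sub (hβ₁ : 1 < β) (hβ₂ : β ≤ 2) (x : ℝ) (a : Bool) :
    rStep β (1 / (β - 1) - x) (!a) = 1 / (β - 1) - rStep β x a := by
  have hβ₁' : β - 1 ≠ 0 := (sub_pos.mpr hβ₁).ne'
  -- `1 / (β - 1)` is the fixed point of `T₁`
  have hfix : β * (1 / (β - 1)) = 1 / (β - 1) + 1 := by field_simp; ring
  rw [rStep, rStep, digitB_one_div_sub_sub hβ₁ hβ₂]
  cases digitB β x a <;> simp only [Bool.not_false, Bool.not_true, Bool.false_eq_true, ↓reduceIte]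
    <;> linear_combination hfix

lemma rItin_one_div_sub_sub (hβ₁ : 1 < β) (hβ₂ : β ≤ 2) (w : List Bool) (x : ℝ) :
    rItin β (1 / (β - 1) - x) (w.map (!·)) = 1 / (β - 1) - rItin β x w := by
  induction w generalizing x with
  | nil => rfl
  | cons a t ih =>
    simp only [rItin, List.map_cons, List.foldl_cons] at ih ⊢
    rw [rStep_one_div_sub_sub hβ₁ hβ₂, ih]

lemma sum_rItin_one_div_sub_one {M : Type*} [AddCommMonoid M] (hβ₁ : 1 < β) (hβ₂ : β ≤ 2)
    (f : ℝ → M) (n : ℕ) :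
    ∑ w : Fin n → Bool, f (rItin β (1 / (β - 1) - 1) (List.ofFn w))
      = ∑ w : Fin n → Bool, f (1 / (β - 1) - rW β (List.ofFn w)) := by
  let flip : Equiv.Perm (Fin n → Bool) :=
    Function.Involutive.toPerm (fun w i => !w i) fun w => funext fun i => Bool.not_not (w i)
  rw [← Equiv.sum_comp flip]
  refine Fintype.sum_congr _ _ fun w => ?_
  rw [rW, ← rItin_one_div_sub_sub hβ₁ hβ₂, List.map_ofFn]
  rfl

end Reflection

lemma volume_setOf_mem_Etower_union_Ebar {β : ℝ} (hβ : 1 < β) (x : ℝ) :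
    volume {y | ∃ ω : ℕ → Bool, (ω, x, y) ∈ Etower β ∪ Ebar β}
      = ENNReal.ofReal (∑' n : ℕ, ((2 * β) ^ n)⁻¹ * ∑ w : Fin n → Bool,
          ((Icc (0 : ℝ) (rW β (List.ofFn w))).indicator 1 x
            + (Icc (1 / (β - 1) - rW β (List.ofFn w)) (1 / (β - 1))).indicator 1 x)) := by
  have hβ₀ : 0 < β := one_pos.trans hβ
  have hind₀ : ∀ s : Set ℝ, 0 ≤ s.indicator (1 : ℝ → ℝ) x := fun s =>
    indicator_nonneg (fun _ _ => zero_le_one) x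
  have hind₁ : ∀ s : Set ℝ, s.indicator (1 : ℝ → ℝ) x ≤ 1 := fun s =>
    indicator_le_self' (fun _ _ => zero_le_one) x
  have hreflect : ∀ r : ℝ, (Icc 0 r).indicator (1 : ℝ → ℝ) (1 / (β - 1) - x)
      = (Icc (1 / (β - 1) - r) (1 / (β - 1))).indicator 1 x := fun r => by
    rw [← indicator_comp_right, preimage_const_sub_Icc, sub_zero, Pi.one_comp]
  have hsum := summable_inv_two_mul_pow_mul_sum hβ
    (fun n w => add_nonneg (hind₀ (Icc 0 (rW β (List.ofFn w))))
      (hind₀ (Icc (1 / (β - 1) - rW β (List.ofFn w)) (1 / (β - 1)))))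
    (fun n w => add_le_add (hind₁ _) (hind₁ _))
  rw [setOf_mem_Etower_union_Ebar, measure_union_neg_of_subset_Ici
      (towerSection_subset_Ici hβ₀ x) (towerSection_subset_Ici hβ₀ _)
      (measurableSet_towerSection _), volume_towerSection hβ₀, volume_towerSection hβ₀,
    ← ENNReal.tsum_add, tsum_list_eq_tsum_sum_ofFn, ENNReal.ofReal_tsum_of_nonneg
      (fun n => mul_nonneg (by positivity) (Finset.sum_nonneg fun w _ =>
        add_nonneg (hind₀ _) (hind₀ _))) hsum]
  refine tsum_congr fun n => ?_
  rw [Finset.mul_sum, ENNReal.ofReal_sum_of_nonneg fun w _ =>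
    mul_nonneg (by positivity) (add_nonneg (hind₀ _) (hind₀ _))]
  refine Finset.sum_congr rfl fun w _ => ?_
  rw [List.length_ofFn, hreflect, mul_add,
    ENNReal.ofReal_add (mul_nonneg (by positivity) (hind₀ _)) (mul_nonneg (by positivity) (hind₀ _))]

theorem stmt15_general (β : ℝ) (hβ : 1 < β ∧ β < 2) (x : ℝ) :
    volume {y : ℝ | ∃ ω : ℕ → Bool, (ω, x, y) ∈ Etower β ∪ Ebar β}
      = ENNReal.ofReal (∑' n : ℕ, ((2 * β) ^ n)⁻¹ * ∑ w : Fin n → Bool,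
          ((Set.Icc (0 : ℝ) (rW β (List.ofFn w))).indicator 1 x
            + (Set.Icc (1 / (β - 1) - rW β (List.ofFn w)) (1 / (β - 1))).indicator 1 x)) ∧
    (∑' n : ℕ, ((2 * β) ^ n)⁻¹ * ∑ w : Fin n → Bool,
        ((Set.Icc (0 : ℝ) (rW β (List.ofFn w))).indicator 1 x
          + (Set.Icc (1 / (β - 1) - rW β (List.ofFn w)) (1 / (β - 1))).indicator 1 x))
      = rhoStar β x := by
  refine ⟨volume_setOf_mem_Etower_union_Ebar hβ.1 x, tsum_congr fun n => ?_⟩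
  rw [Finset.sum_add_distrib, Finset.sum_add_distrib]
  exact congrArg (fun s => _ * (_ + s))
    (sum_rItin_one_div_sub_one hβ.1 hβ.2.le (fun r => (Icc r (1 / (β - 1))).indicator 1 x) n).symm

/-- the vertical sections of the double tower recover the invariant density: for
every `x ∈ I_β` the Lebesgue measure of `{y : ∃ ω, (ω,x,y) ∈ E ∪ Ē}` equals
`Σ_n (2β)^{-n} Σ_{w ∈ {0,1}ⁿ} (χ_{[0,r(w)]}(x) + χ_{[1/(β-1)-r(w), 1/(β-1)]}(x))`, and this
equals `ρ*_β(x)`. -/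
theorem stmt15 (β : ℝ) (hβ : 1 < β ∧ β < 2) (x : ℝ) (hx : x ∈ Ibeta β) :
    volume {y : ℝ | ∃ ω : ℕ → Bool, (ω, x, y) ∈ Etower β ∪ Ebar β}
      = ENNReal.ofReal (∑' n : ℕ, ((2 * β) ^ n)⁻¹ * ∑ w : Fin n → Bool,
          ((Set.Icc (0 : ℝ) (rW β (List.ofFn w))).indicator 1 x
            + (Set.Icc (1 / (β - 1) - rW β (List.ofFn w)) (1 / (β - 1))).indicator 1 x)) ∧
    (∑' n : ℕ, ((2 * β) ^ n)⁻¹ * ∑ w : Fin n → Bool,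
        ((Set.Icc (0 : ℝ) (rW β (List.ofFn w))).indicator 1 x
          + (Set.Icc (1 / (β - 1) - rW β (List.ofFn w)) (1 / (β - 1))).indicator 1 x))
      = rhoStar β x :=
  stmt15_general β hβ x

end RandomBeta
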